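/- Let n, m be positive integers. Let ḡ⁺, g⁺, g₀⁺ be real m×n matrices and g, g₀ be real n×m matrices with g⁺ g = I_m and g₀⁺ g₀ = I_m. Let f, f₀, d, d₀ ∈ ℝⁿ, u, u₀ ∈ ℝᵐ, and define ẋ = f + g u + d, ẋ₀ = f₀ + g₀ u₀ + d₀, H = (ḡ⁺ − g⁺)ẋ + g⁺ f + g⁺ d, H₀ = (ḡ⁺ − g₀⁺)ẋ₀ + g₀⁺ f₀ + g₀⁺ d₀, and ξ = H − H₀. Suppose there exist constants c ≥ 0, β ≥ 0, δ̄₁ ≥ 0 such that (i) ‖(ḡ⁺ g − I_m) v‖ ≤ c ‖v‖ for all v ∈ ℝᵐ, (ii) ‖u − u₀‖ ≤ 2β, and (iii) ‖ḡ⁺[(g − g₀)u₀ + (f − f₀) + (d − d₀)]‖ ≤ δ̄₁. Then ‖ξ‖ ≤ 2βc + δ̄₁. -/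

import Mathlib

/-!
Since `g⁺` is a left inverse of `g`, the estimate collapses to `H = ḡ⁺ ẋ - u`, and likewise
`H₀ = ḡ⁺ ẋ₀ - u₀`. Subtracting and inserting `ḡ⁺ g u₀` splits the error as
`ξ = (ḡ⁺ g - I)(u - u₀) + ḡ⁺ [(g - g₀) u₀ + (f - f₀) + (d - d₀)]`,
whose two terms are bounded by `2βc` and `δ̄₁` respectively.
-/

/-- The Euclidean norm of a finite real vector. -/
noncomputable def eucNorm {k : ℕ} (v : Fin k → ℝ) : ℝ :=
  ‖(WithLp.equiv 2 (Fin k → ℝ)).symm v‖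

open Matrix

theorem eucNorm_add_le {k : ℕ} (a b : Fin k → ℝ) : eucNorm (a + b) ≤ eucNorm a + eucNorm b :=
  norm_add_le _ _

section MulVec

variable {ι κ R : Type*} [Fintype ι] [Fintype κ] [CommRing R]

theorem sub_mulVec_add_eq_of_mul_eq_one [DecidableEq κ] {A P : Matrix κ ι R}
    {B : Matrix ι κ R} (hPB : P * B = 1) (f d : ι → R) (u : κ → R) :
    (A - P) *ᵥ (f + B *ᵥ u + d) + P *ᵥ f + P *ᵥ d = A *ᵥ (f + B *ᵥ u + d) - u := by
  have hPBu : P *ᵥ (B *ᵥ u) = u := by rw [mulVec_mulVec, hPB, one_mulVec]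
  simp only [sub_mulVec, mulVec_add, hPBu]
  abel

theorem mulVec_sub_sub_mulVec_sub [DecidableEq κ] (A : Matrix κ ι R) (B B₀ : Matrix ι κ R)
    (f f₀ d d₀ : ι → R) (u u₀ : κ → R) :
    (A *ᵥ (f + B *ᵥ u + d) - u) - (A *ᵥ (f₀ + B₀ *ᵥ u₀ + d₀) - u₀) =
      (A * B - 1) *ᵥ (u - u₀) + A *ᵥ ((B - B₀) *ᵥ u₀ + (f - f₀) + (d - d₀)) := by
  simp only [sub_mulVec, mulVec_add, mulVec_sub, one_mulVec, ← mulVec_mulVec]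
  abel

end MulVec

theorem tde_error_bound_general (n m : ℕ)
    (gbp gp g0p : Matrix (Fin m) (Fin n) ℝ) (g g0 : Matrix (Fin n) (Fin m) ℝ)
    (hg : gp * g = 1) (hg0 : g0p * g0 = 1)
    (f f0 d d0 : Fin n → ℝ) (u u0 : Fin m → ℝ)
    (xdot xdot0 : Fin n → ℝ) (H H0 ξ : Fin m → ℝ)
    (hxdot : xdot = f + g.mulVec u + d)
    (hxdot0 : xdot0 = f0 + g0.mulVec u0 + d0)
    (hH : H = (gbp - gp).mulVec xdot + gp.mulVec f + gp.mulVec d)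
    (hH0 : H0 = (gbp - g0p).mulVec xdot0 + g0p.mulVec f0 + g0p.mulVec d0)
    (hξ : ξ = H - H0)
    (c β δ₁ : ℝ) (hc : 0 ≤ c)
    (hcb : ∀ v : Fin m → ℝ, eucNorm ((gbp * g - 1).mulVec v) ≤ c * eucNorm v)
    (hu : eucNorm (u - u0) ≤ 2 * β)
    (hδ : eucNorm (gbp.mulVec ((g - g0).mulVec u0 + (f - f0) + (d - d0))) ≤ δ₁) :
    eucNorm ξ ≤ 2 * β * c + δ₁ := by
  subst hξ hH hH0 hxdot hxdot0
  rw [sub_mulVec_add_eq_of_mul_eq_one hg, sub_mulVec_add_eq_of_mul_eq_one hg0,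
    mulVec_sub_sub_mulVec_sub]
  calc _ ≤ eucNorm ((gbp * g - 1) *ᵥ (u - u0)) +
        eucNorm (gbp *ᵥ ((g - g0) *ᵥ u0 + (f - f0) + (d - d0))) := eucNorm_add_le _ _
    _ ≤ c * (2 * β) + δ₁ := add_le_add ((hcb _).trans (mul_le_mul_of_nonneg_left hu hc)) hδ
    _ = 2 * β * c + δ₁ := by ring

/-- Boundedness of the time-delay-estimation error (Lemma 1). -/
theorem tde_error_bound (n m : ℕ) (hn : 0 < n) (hm : 0 < m)
    (gbp gp g0p : Matrix (Fin m) (Fin n) ℝ) (g g0 : Matrix (Fin n) (Fin m) ℝ)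
    (hg : gp * g = 1) (hg0 : g0p * g0 = 1)
    (f f0 d d0 : Fin n → ℝ) (u u0 : Fin m → ℝ)
    (xdot xdot0 : Fin n → ℝ) (H H0 ξ : Fin m → ℝ)
    (hxdot : xdot = f + g.mulVec u + d)
    (hxdot0 : xdot0 = f0 + g0.mulVec u0 + d0)
    (hH : H = (gbp - gp).mulVec xdot + gp.mulVec f + gp.mulVec d)
    (hH0 : H0 = (gbp - g0p).mulVec xdot0 + g0p.mulVec f0 + g0p.mulVec d0)
    (hξ : ξ = H - H0)
    (c β δ₁ : ℝ) (hc : 0 ≤ c) (hβ : 0 ≤ β) (hδ₁ : 0 ≤ δ₁)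
    (hcb : ∀ v : Fin m → ℝ, eucNorm ((gbp * g - 1).mulVec v) ≤ c * eucNorm v)
    (hu : eucNorm (u - u0) ≤ 2 * β)
    (hδ : eucNorm (gbp.mulVec ((g - g0).mulVec u0 + (f - f0) + (d - d0))) ≤ δ₁) :
    eucNorm ξ ≤ 2 * β * c + δ₁ :=
  tde_error_bound_general n m gbp gp g0p g g0 hg hg0 f f0 d d0 u u0 xdot xdot0 H H0 ξ hxdot hxdot0
    hH hH0 hξ c β δ₁ hc hcb hu hδ
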